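/- arXiv:2403.20307 — 4 statements merged into one kernel-verified Lean document; each statement's English description precedes it below -/
import Mathlib

section
/- For any integers s, t ≥ 1, c_f[s·t] ≤ c_f[s]·c_f[t], where c_f[m] is the smallest constant such that f(x_1+⋯+x_m) ≤ (c_f[m]/m)(√f(x_1)+⋯+√f(x_m))² for all nonnegative x_1,…,x_m. -/
open Finset

/-- `IsCf f m c` : `c` is the smallest positive real such that
`f (x₁ + ⋯ + x_m) ≤ (c/m) (√f(x₁) + ⋯ + √f(x_m))²` for all nonnegative `x₁,…,x_m`. -/
def IsCf (f : ℝ → ℝ) (m : ℕ) (c : ℝ) : Prop :=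
  IsLeast {c : ℝ | 0 < c ∧ ∀ x : Fin m → ℝ, (∀ i, 0 ≤ x i) →
    f (∑ i, x i) ≤ c / m * (∑ i, Real.sqrt (f (x i))) ^ 2} c

/-!
Split `s * t` points into `s` blocks of `t`. The inequality is cleaner in its square-root form
`√f(∑ xᵢ) ≤ √(c/m) ∑ √f(xᵢ)`, which composes: applying the `s`-bound to the block sums and then
the `t`-bound inside each block gives the `s * t`-bound with constant `cs * ct`, and minimality
of `cst` finishes.
-/

def CfBound (f : ℝ → ℝ) (m : ℕ) (c : ℝ) : Prop :=
  ∀ x : Fin m → ℝ, (∀ i, 0 ≤ x i) → f (∑ i, x i) ≤ c / m * (∑ i, Real.sqrt (f (x i))) ^ 2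

theorem sum_finProdFinEquiv {M : Type*} [AddCommMonoid M] {s t : ℕ} (g : Fin (s * t) → M) :
    ∑ i, g i = ∑ j : Fin s, ∑ k : Fin t, g (finProdFinEquiv (j, k)) := by
  rw [← Equiv.sum_comp finProdFinEquiv g, Fintype.sum_prod_type]

section CfBound

variable {f : ℝ → ℝ} {m : ℕ} {c : ℝ}

theorem cfBound_iff_sqrt_le (hc : 0 ≤ c) :
    CfBound f m c ↔ ∀ x : Fin m → ℝ, (∀ i, 0 ≤ x i) →
      Real.sqrt (f (∑ i, x i)) ≤ Real.sqrt (c / m) * ∑ i, Real.sqrt (f (x i)) := by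
  refine forall_congr' fun x => imp_congr_right fun _ => ?_
  rw [Real.sqrt_le_left (by positivity), mul_pow, Real.sq_sqrt (by positivity)]

theorem CfBound.mul {s t : ℕ} {a b : ℝ} (ha : 0 ≤ a) (hb : 0 ≤ b)
    (hs : CfBound f s a) (ht : CfBound f t b) : CfBound f (s * t) (a * b) := by
  rw [cfBound_iff_sqrt_le ha] at hs
  rw [cfBound_iff_sqrt_le hb] at ht
  rw [cfBound_iff_sqrt_le (mul_nonneg ha hb)]
  intro x hx
  let block : Fin s → Fin t → ℝ := fun j k => x (finProdFinEquiv (j, k))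
  calc Real.sqrt (f (∑ i, x i))
      = Real.sqrt (f (∑ j, ∑ k, block j k)) := by rw [sum_finProdFinEquiv]
    _ ≤ Real.sqrt (a / s) * ∑ j, Real.sqrt (f (∑ k, block j k)) :=
        hs _ fun j => sum_nonneg fun k _ => hx _
    _ ≤ Real.sqrt (a / s) * ∑ j, Real.sqrt (b / t) * ∑ k, Real.sqrt (f (block j k)) := by
        gcongr with j; exact ht _ fun k => hx _
    _ = Real.sqrt (a * b / ↑(s * t)) * ∑ i, Real.sqrt (f (x i)) := by
        rw [← mul_sum, ← mul_assoc, ← Real.sqrt_mul (by positivity), div_mul_div_comm,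
          Nat.cast_mul, sum_finProdFinEquiv (fun i => Real.sqrt (f (x i)))]

end CfBound

theorem cf_submultiplicative_general (f : ℝ → ℝ)
    (s t : ℕ)
    (cs ct cst : ℝ) (hcs : IsCf f s cs) (hct : IsCf f t ct)
    (hcst : IsCf f (s * t) cst) :
    cst ≤ cs * ct :=
  hcst.2 ⟨mul_pos hcs.1.1 hct.1.1,
    CfBound.mul hcs.1.1.le hct.1.1.le hcs.1.2 hct.1.2⟩

theorem cf_submultiplicative (f : ℝ → ℝ) (hf : ∀ x, 0 ≤ x → 0 ≤ f x)
    (s t : ℕ) (hs : 1 ≤ s) (ht : 1 ≤ t)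
    (cs ct cst : ℝ) (hcs : IsCf f s cs) (hct : IsCf f t ct)
    (hcst : IsCf f (s * t) cst) :
    cst ≤ cs * ct :=
  cf_submultiplicative_general f s t cs ct cst hcs hct hcst
end

section
/- If s ≥ t ≥ 1 are integers, then c_f[s] ≥ c_f[t]·s/t. -/
open Finset

/-! Padding `x₁,…,x_t` with `s - t` zeros changes neither side of the inequality defining
`c_f[s]` except for the factor `1/s`, so `c_f[s] · t / s` is admissible for `t` variables. -/

open Function

theorem Fintype.sum_extend_zero {ι κ M : Type*} [Fintype ι] [Fintype κ] [AddCommMonoid M]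
    {e : ι → κ} (he : Injective e) (x : ι → M) :
    ∑ j, extend e x 0 j = ∑ i, x i :=
  (Fintype.sum_of_injective e he x (extend e x 0)
    (fun _ hj ↦ extend_apply' (f := e) x 0 _ (by simpa using hj))
    fun _ ↦ (he.extend_apply _ _ _).symm).symm

theorem le_mul_sq_sum_sqrt_of_injective {ι κ : Type*} [Fintype ι] [Fintype κ]
    {f : ℝ → ℝ} (hf0 : f 0 = 0) {e : ι → κ} (he : Injective e) {C : ℝ}
    (h : ∀ y : κ → ℝ, (∀ j, 0 ≤ y j) → f (∑ j, y j) ≤ C * (∑ j, √(f (y j))) ^ 2)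
    (x : ι → ℝ) (hx : ∀ i, 0 ≤ x i) :
    f (∑ i, x i) ≤ C * (∑ i, √(f (x i))) ^ 2 := by
  have hy : ∀ j, 0 ≤ extend e x 0 j := fun j ↦ by
    by_cases hj : ∃ i, e i = j
    · obtain ⟨i, rfl⟩ := hj
      simpa [he.extend_apply] using hx i
    · simp [extend_apply' _ _ _ hj]
  have hsqrt : (fun j ↦ √(f (extend e x 0 j))) = extend e (fun i ↦ √(f (x i))) 0 := by
    funext j
    simp only [apply_extend (fun y ↦ √(f y))]
    congr 1
    funext _
    simp [hf0]
  simpa only [hsqrt, Fintype.sum_extend_zero he] using h (extend e x 0) hy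

theorem cf_superlinear_general (f : ℝ → ℝ) (hf0 : f 0 = 0)
    (s t : ℕ) (ht : 1 ≤ t) (hts : t ≤ s)
    (cs ct : ℝ) (hcs : IsCf f s cs) (hct : IsCf f t ct) :
    ct * s / t ≤ cs := by
  obtain ⟨⟨hcs_pos, hcs_bound⟩, -⟩ := hcs
  have hs_pos : (0 : ℝ) < s := by norm_cast; omega
  have ht_pos : (0 : ℝ) < t := by exact_mod_cast ht
  have hmem : cs * t / s ∈ {c : ℝ | 0 < c ∧ ∀ x : Fin t → ℝ, (∀ i, 0 ≤ x i) →
      f (∑ i, x i) ≤ c / t * (∑ i, √(f (x i))) ^ 2} := by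
    refine ⟨by positivity, fun x hx ↦ ?_⟩
    have hpad := le_mul_sq_sum_sqrt_of_injective hf0 (Fin.castLE_injective hts) hcs_bound x hx
    rwa [show cs * t / s / t = cs / s by field_simp]
  have hct_le := hct.2 hmem
  rw [div_le_iff₀ ht_pos]
  rwa [le_div_iff₀ hs_pos] at hct_le

theorem cf_superlinear (f : ℝ → ℝ) (hf : ∀ x, 0 ≤ x → 0 ≤ f x) (hf0 : f 0 = 0)
    (s t : ℕ) (ht : 1 ≤ t) (hts : t ≤ s)
    (cs ct : ℝ) (hcs : IsCf f s cs) (hct : IsCf f t ct) :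
    ct * s / t ≤ cs :=
  cf_superlinear_general f hf0 s t ht hts cs ct hcs hct
end

section
/- The Huber loss f_τ satisfies f_τ(x_1+⋯+x_s) ≤ (√f_τ(x_1)+⋯+√f_τ(x_s))² for all nonnegative x_1,…,x_s. -/
open Finset

/-- The Huber loss function with parameter `τ` (on nonnegative inputs). -/
noncomputable def huber (τ x : ℝ) : ℝ := if x ≤ τ then x ^ 2 / (2 * τ) else x - τ / 2

/- For `y ≤ x` we have `f_τ(x) ≤ y²/(2τ) + (x - y)`, with equality at `y = min x τ`.
Writing `m_a = min a τ`, `m_b = min b τ` and testing `f_τ(a + b)` against `y = m_a + m_b` gives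
`f_τ(a + b) ≤ f_τ(a) + f_τ(b) + m_a m_b / τ`, and `m² / (2τ) ≤ f_τ` bounds the cross term by
`2 √(f_τ(a) f_τ(b))`. So `√f_τ` is subadditive, which extends to finite sums. -/

section Huber

variable {τ : ℝ}

lemma huber_le_of_le (hτ : 0 < τ) {x y : ℝ} (hyx : y ≤ x) :
    huber τ x ≤ y ^ 2 / (2 * τ) + (x - y) := by
  unfold huber
  split_ifs with hx
  · have : (x - y) * (x + y) ≤ (x - y) * (2 * τ) :=
      mul_le_mul_of_nonneg_left (by linarith) (sub_nonneg.2 hyx)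
    rw [div_add' _ _ _ (by positivity), div_le_div_iff_of_pos_right (by positivity)]
    nlinarith
  · have : 0 ≤ (y - τ) ^ 2 / (2 * τ) := by positivity
    have hexpand : (y - τ) ^ 2 / (2 * τ) = y ^ 2 / (2 * τ) - y + τ / 2 := by field_simp; ring
    linarith

lemma huber_eq_min (x : ℝ) :
    huber τ x = min x τ ^ 2 / (2 * τ) + (x - min x τ) := by
  unfold huber
  split_ifs with hx
  · simp [min_eq_left hx]
  · rw [min_eq_right (not_le.1 hx).le]
    field_simp
    ring

lemma huber_nonneg (hτ : 0 < τ) (x : ℝ) : 0 ≤ huber τ x := by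
  rw [huber_eq_min]
  have : 0 ≤ x - min x τ := sub_nonneg.2 (min_le_left x τ)
  positivity

lemma sq_min_div_le_huber (x : ℝ) : min x τ ^ 2 / (2 * τ) ≤ huber τ x := by
  rw [huber_eq_min]
  linarith [min_le_left x τ]

lemma sqrt_huber_add_le (hτ : 0 < τ) (a b : ℝ) :
    √(huber τ (a + b)) ≤ √(huber τ a) + √(huber τ b) := by
  set ma := min a τ
  set mb := min b τ
  have hab : huber τ (a + b) ≤ huber τ a + huber τ b + ma * mb / τ := by
    calc huber τ (a + b) ≤ (ma + mb) ^ 2 / (2 * τ) + (a + b - (ma + mb)) :=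
          huber_le_of_le hτ (add_le_add (min_le_left a τ) (min_le_left b τ))
      _ = huber τ a + huber τ b + ma * mb / τ := by
          rw [huber_eq_min a, huber_eq_min b]
          field_simp
          ring
  have hcross : ma * mb / τ ≤ 2 * (√(huber τ a) * √(huber τ b)) := by
    have hsq : (ma * mb / τ) ^ 2 ≤ 4 * (huber τ a * huber τ b) := by
      calc (ma * mb / τ) ^ 2 = 4 * (ma ^ 2 / (2 * τ) * (mb ^ 2 / (2 * τ))) := by
            field_simp
            ring
        _ ≤ 4 * (huber τ a * huber τ b) := by
            gcongr
            · exact huber_nonneg hτ a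
            · exact sq_min_div_le_huber a
            · exact sq_min_div_le_huber b
    rw [← Real.sqrt_mul (huber_nonneg hτ a)]
    nlinarith [Real.sqrt_nonneg (huber τ a * huber τ b),
      Real.sq_sqrt (mul_nonneg (huber_nonneg hτ a) (huber_nonneg hτ b))]
  rw [Real.sqrt_le_iff]
  refine ⟨by positivity, ?_⟩
  rw [add_sq, Real.sq_sqrt (huber_nonneg hτ a), Real.sq_sqrt (huber_nonneg hτ b)]
  linarith

end Huber

theorem huber_cf_le_general (τ : ℝ) (hτ : 0 < τ) (s : ℕ) (x : Fin s → ℝ) :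
    huber τ (∑ i, x i) ≤ (∑ i, Real.sqrt (huber τ (x i))) ^ 2 := by
  have hsum := le_sum_of_subadditive (fun t ↦ √(huber τ t)) (by simp [huber, hτ.le])
    (sqrt_huber_add_le hτ) univ x
  exact (Real.sqrt_le_iff.1 hsum).2

theorem huber_cf_le (τ : ℝ) (hτ : 0 < τ) (s : ℕ) (x : Fin s → ℝ) (hx : ∀ i, 0 ≤ x i) :
    huber τ (∑ i, x i) ≤ (∑ i, Real.sqrt (huber τ (x i))) ^ 2 :=
  huber_cf_le_general τ hτ s x
end

section
/- Let f₁,…,f_n ≥ 0 with Σf_i > 0, let E₁,…,E_n be independent standard exponential random variables, and fix ε > 0. For each i, f_i/(Σ_j f_j) ≥ P[ f_i/E_i ≥ (1+ε)·max_{j≠i} f_j/E_j ] ≥ f_i / ((1+ε)·Σ_j f_j). -/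
open Finset MeasureTheory ProbabilityTheory Real Set

/-!
Almost surely every `E j` is positive, and then for `f i > 0` the event says
`c j * E i ≤ E j` for all `j ≠ i`, with `c j = (1 + ε) f j / f i`. Given `E i = t`, independence
and the exponential tail give this probability `exp (-(∑ c j) t)`; integrating against the law of
`E i` (a Laplace transform of the exponential law) gives
`(1 + ∑ c j)⁻¹ = f i / (f i + (1 + ε) ∑_{j ≠ i} f j)`, which lies between the two bounds.
-/

namespace ProbabilityTheory

section ExponentialLaw

variable {r : ℝ}

instance nullSingletonClass_expMeasure : NullSingletonClass (expMeasure r) := by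
  unfold expMeasure gammaMeasure; infer_instance

lemma expMeasure_Iic (hr : 0 < r) (x : ℝ) :
    expMeasure r (Iic x) = ENNReal.ofReal (if 0 ≤ x then 1 - exp (-(r * x)) else 0) := by
  have := isProbabilityMeasure_expMeasure hr
  rw [← ofReal_cdf, cdf_expMeasure_eq hr]

lemma expMeasure_Ici (hr : 0 < r) {t : ℝ} (ht : 0 ≤ t) :
    expMeasure r (Ici t) = ENNReal.ofReal (exp (-(r * t))) := by
  have := isProbabilityMeasure_expMeasure hr
  rw [← measure_congr Ioi_ae_eq_Ici, ← compl_Iic, prob_compl_eq_one_sub measurableSet_Iic,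
    expMeasure_Iic hr, if_pos ht, ← ENNReal.ofReal_one,
    ← ENNReal.ofReal_sub _ (sub_nonneg.2 (exp_le_one_iff.2 (neg_nonpos.2 (mul_nonneg hr.le ht)))),
    sub_sub_cancel]

lemma ae_expMeasure_pos (hr : 0 < r) : ∀ᵐ t ∂expMeasure r, 0 < t := by
  simp only [ae_iff, not_lt]
  rw [← Set.Iic.eq_def, expMeasure_Iic hr, if_pos le_rfl]
  simp

lemma lintegral_exp_neg_mul_expMeasure (hr : 0 < r) {l : ℝ} (hl : 0 ≤ l) :
    ∫⁻ t, ENNReal.ofReal (exp (-(l * t))) ∂expMeasure r = ENNReal.ofReal (r / (r + l)) := by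
  have hdensity : ∀ t, exponentialPDF r t * ENNReal.ofReal (exp (-(l * t)))
      = ENNReal.ofReal (r / (r + l)) * exponentialPDF (r + l) t := by
    intro t
    rcases le_or_gt 0 t with ht | ht
    · rw [exponentialPDF_of_nonneg ht, exponentialPDF_of_nonneg ht,
        ← ENNReal.ofReal_mul (by positivity), ← ENNReal.ofReal_mul (by positivity), mul_assoc,
        ← exp_add, show -(r * t) + -(l * t) = -((r + l) * t) by ring]
      field_simp
    · simp [exponentialPDF_of_neg ht]
  have hpdf (s : ℝ) : Measurable (exponentialPDF s) :=
    (measurable_exponentialPDFReal s).ennreal_ofReal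
  rw [show expMeasure r = volume.withDensity (exponentialPDF r) from rfl,
    lintegral_withDensity_eq_lintegral_mul _ (hpdf r) (by fun_prop)]
  simp only [Pi.mul_apply, hdensity]
  rw [lintegral_const_mul _ (hpdf _),
    lintegral_exponentialPDF_eq_one (by positivity), mul_one]

end ExponentialLaw

variable {Ω : Type*} [MeasurableSpace Ω] {μ : Measure Ω}

lemma hasLaw_expMeasure_of_measure_le [IsFiniteMeasure μ] {r : ℝ} (hr : 0 < r) {X : Ω → ℝ}
    (hX : Measurable X) (h : ∀ s, 0 ≤ s → μ {ω | X ω ≤ s} = ENNReal.ofReal (1 - exp (-(r * s)))) :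
    HasLaw X (expMeasure r) μ where
  aemeasurable := hX.aemeasurable
  map_eq := by
    have := isProbabilityMeasure_expMeasure hr
    refine Measure.ext_of_Iic _ _ fun a => ?_
    rw [Measure.map_apply hX measurableSet_Iic, expMeasure_Iic hr]
    split_ifs with ha
    · exact h a ha
    · rw [ENNReal.ofReal_zero]
      refine measure_mono_null (t := {ω | X ω ≤ 0}) (fun ω (hω : X ω ≤ a) => ?_)
        (by simp [h 0 le_rfl])
      exact hω.trans (not_le.1 ha).le

lemma HasLaw.ae_pos_of_expMeasure {X : Ω → ℝ} {r : ℝ} (hr : 0 < r)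
    (hX : HasLaw X (expMeasure r) μ) : ∀ᵐ ω ∂μ, 0 < X ω :=
  ae_of_ae_map hX.aemeasurable (hX.map_eq ▸ ae_expMeasure_pos hr)

lemma HasLaw.measure_preimage_Ici_of_expMeasure {X : Ω → ℝ} {r : ℝ} (hr : 0 < r)
    (hX : HasLaw X (expMeasure r) μ) {t : ℝ} (ht : 0 ≤ t) :
    μ (X ⁻¹' Ici t) = ENNReal.ofReal (exp (-(r * t))) := by
  rw [← expMeasure_Ici hr ht, ← hX.map_eq, Measure.map_apply_of_aemeasurable hX.aemeasurable
    measurableSet_Ici]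

lemma IndepFun.measure_preimage_prodMk_eq_lintegral {α β : Type*} [MeasurableSpace α]
    [MeasurableSpace β] [IsFiniteMeasure μ] {X : Ω → α} {Y : Ω → β} (hXY : IndepFun X Y μ)
    (hX : AEMeasurable X μ) (hY : AEMeasurable Y μ) {s : Set (α × β)} (hs : MeasurableSet s) :
    μ ((fun ω => (X ω, Y ω)) ⁻¹' s) = ∫⁻ x, μ (Y ⁻¹' (Prod.mk x ⁻¹' s)) ∂μ.map X := by
  rw [← Measure.map_apply_of_aemeasurable (hX.prodMk hY) hs, hXY.map_prod_eq_prod_map_map hX hY,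
    Measure.prod_apply hs]
  exact lintegral_congr fun x => Measure.map_apply_of_aemeasurable hY (measurable_prodMk_left hs)

variable {ι : Type*} {E : ι → Ω → ℝ}

lemma measure_forall_le_eq_exp_of_iIndepFun (hindep : iIndepFun E μ)
    (hlaw : ∀ j, HasLaw (E j) (expMeasure 1) μ) (T : Finset ι) {c : ι → ℝ}
    (hc : ∀ j ∈ T, 0 ≤ c j) {t : ℝ} (ht : 0 ≤ t) :
    μ {ω | ∀ j ∈ T, c j * t ≤ E j ω} = ENNReal.ofReal (exp (-((∑ j ∈ T, c j) * t))) := by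
  have hset : {ω | ∀ j ∈ T, c j * t ≤ E j ω} = ⋂ j ∈ T, E j ⁻¹' Ici (c j * t) := by
    ext; simp
  rw [hset, hindep.meas_biInter fun j _ => ⟨Ici (c j * t), measurableSet_Ici, rfl⟩,
    prod_congr rfl fun j hj =>
      (hlaw j).measure_preimage_Ici_of_expMeasure one_pos (mul_nonneg (hc j hj) ht),
    ← ENNReal.ofReal_prod_of_nonneg fun j _ => (exp_pos _).le, ← exp_sum, sum_mul,
    ← sum_neg_distrib]
  simp only [one_mul]

lemma measure_forall_mul_le_eq_of_iIndepFun [IsFiniteMeasure μ] (hindep : iIndepFun E μ)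
    (hlaw : ∀ j, HasLaw (E j) (expMeasure 1) μ) {i : ι} {T : Finset ι} (hi : i ∉ T)
    {c : ι → ℝ} (hc : ∀ j ∈ T, 0 ≤ c j) :
    μ {ω | ∀ j ∈ T, c j * E i ω ≤ E j ω} = ENNReal.ofReal (1 + ∑ j ∈ T, c j)⁻¹ := by
  have hmeas j : AEMeasurable (E j) μ := (hlaw j).aemeasurable
  have hindep' : IndepFun (E i) (fun ω (j : T) => E j ω) μ :=
    (hindep.indepFun_finset₀ {i} T (disjoint_singleton_left.2 hi) hmeas).comp
      (measurable_pi_apply (⟨i, mem_singleton_self i⟩ : ({i} : Finset ι))) measurable_id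
  have hS : MeasurableSet {p : ℝ × (T → ℝ) | ∀ j : T, c j * p.1 ≤ p.2 j} := by
    rw [ofPred_forall]
    exact MeasurableSet.iInter fun j => measurableSet_le (by fun_prop) (by fun_prop)
  calc μ {ω | ∀ j ∈ T, c j * E i ω ≤ E j ω}
      = ∫⁻ t, μ {ω | ∀ j ∈ T, c j * t ≤ E j ω} ∂expMeasure 1 := by
        simpa [← (hlaw i).map_eq] using
          hindep'.measure_preimage_prodMk_eq_lintegral (hmeas i) (by fun_prop) hS
    _ = ∫⁻ t, ENNReal.ofReal (exp (-((∑ j ∈ T, c j) * t))) ∂expMeasure 1 :=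
        lintegral_congr_ae <| (ae_expMeasure_pos one_pos).mono fun t ht =>
          measure_forall_le_eq_exp_of_iIndepFun hindep hlaw T hc ht.le
    _ = ENNReal.ofReal (1 + ∑ j ∈ T, c j)⁻¹ := by
        rw [lintegral_exp_neg_mul_expMeasure one_pos (sum_nonneg hc), one_div]

lemma measure_forall_mul_div_le_div_eq_of_iIndepFun [IsFiniteMeasure μ] [Fintype ι]
    [DecidableEq ι] (hindep : iIndepFun E μ) (hlaw : ∀ j, HasLaw (E j) (expMeasure 1) μ)
    {f : ι → ℝ} (hf : ∀ j, 0 ≤ f j) (hpos : 0 < ∑ j, f j) {a : ℝ} (ha : 0 < a) (i : ι) :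
    μ {ω | ∀ j, j ≠ i → a * (f j / E j ω) ≤ f i / E i ω}
      = ENNReal.ofReal (f i / (f i + a * ∑ j ∈ univ.erase i, f j)) := by
  have hE : ∀ᵐ ω ∂μ, ∀ j, 0 < E j ω :=
    ae_all_iff.2 fun j => (hlaw j).ae_pos_of_expMeasure one_pos
  rcases (hf i).eq_or_lt with hfi | hfi
  · obtain ⟨k, -, hk⟩ :=
      exists_lt_of_sum_lt (by simpa using hpos : ∑ _j : ι, (0 : ℝ) < ∑ j, f j)
    have hki : k ≠ i := by rintro rfl; linarith
    rw [← hfi, zero_div, ENNReal.ofReal_zero, measure_eq_zero_iff_ae_notMem]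
    filter_upwards [hE] with ω hω hevent
    have hk_gap := hevent k hki
    rw [zero_div] at hk_gap
    exact hk_gap.not_gt (mul_pos ha (div_pos hk (hω k)))
  · set c : ι → ℝ := fun j => a * f j / f i
    have hevent : {ω | ∀ j, j ≠ i → a * (f j / E j ω) ≤ f i / E i ω}
        =ᵐ[μ] {ω | ∀ j ∈ univ.erase i, c j * E i ω ≤ E j ω} := by
      filter_upwards [hE] with ω hω
      refine propext (forall_congr' fun j => ?_)
      rw [mem_erase, and_iff_left (Finset.mem_univ j), mul_div_assoc',
        div_le_div_iff₀ (hω j) (hω i), div_mul_eq_mul_div, div_le_iff₀ hfi, mul_comm (E j ω)]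
    rw [measure_congr hevent, measure_forall_mul_le_eq_of_iIndepFun hindep hlaw
      (notMem_erase i univ) fun j _ => div_nonneg (mul_nonneg ha.le (hf j)) hfi.le,
      ← sum_div, ← mul_sum]
    congr 1
    field_simp

end ProbabilityTheory

theorem exponential_max_gap_probability
    {Ω : Type*} [MeasurableSpace Ω] (μ : Measure Ω) [IsProbabilityMeasure μ]
    (n : ℕ) (E : Fin n → Ω → ℝ)
    (hmeas : ∀ i, Measurable (E i))
    (hindep : iIndepFun E μ)
    (hexp : ∀ i, ∀ s : ℝ, 0 ≤ s →
      μ {ω | E i ω ≤ s} = ENNReal.ofReal (1 - Real.exp (-s)))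
    (f : Fin n → ℝ) (hf : ∀ i, 0 ≤ f i) (hpos : 0 < ∑ i, f i)
    (ε : ℝ) (hε : 0 < ε) :
    ∀ i,
      ENNReal.ofReal (f i / ((1 + ε) * ∑ j, f j)) ≤
        μ {ω | ∀ j, j ≠ i → (1 + ε) * (f j / E j ω) ≤ f i / E i ω} ∧
      μ {ω | ∀ j, j ≠ i → (1 + ε) * (f j / E j ω) ≤ f i / E i ω} ≤
        ENNReal.ofReal (f i / ∑ j, f j) := by
  intro i
  have hlaw j : HasLaw (E j) (expMeasure 1) μ :=
    hasLaw_expMeasure_of_measure_le one_pos (hmeas j) (by simpa using hexp j)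
  have hrest : 0 ≤ ∑ j ∈ univ.erase i, f j := sum_nonneg fun j _ => hf j
  rw [measure_forall_mul_div_le_div_eq_of_iIndepFun hindep hlaw hf hpos (by linarith) i]
  rw [← add_sum_erase _ _ (mem_univ i)] at hpos ⊢
  constructor <;> refine ENNReal.ofReal_le_ofReal (div_le_div_of_nonneg_left (hf i) ?_ ?_) <;>
    nlinarith [mul_nonneg hε.le (hf i), mul_nonneg hε.le hrest]
end
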